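/- Let k be a field, M a linearly ordered type of monomials, and T a set of monic polynomials in M →₀ k with associated one-step reduction relation →. Write ~ for the equivalence closure of → on all of M →₀ k. Then for all f, g ∈ M →₀ k: f ~ g if and only if f − g lies in the k-linear span of T. Consequently, the connected components of the rewriting system are exactly the cosets of the span of T, i.e., the elements of the quotient space (M →₀ k) / span(T). -/
import Mathlib


open Finsupp Relation

variable {k M : Type*}

/-- The leading monomial of a nonzero polynomial `f : M →₀ k`: the maximum of its support. -/
noncomputable def leadMon [Zero k] [LinearOrder M] (f : M →₀ k) (hf : f ≠ 0) : M :=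
  f.support.max' (Finsupp.support_nonempty_iff.mpr hf)

/-- A polynomial is monic if it is nonzero and its leading coefficient equals 1. -/
def IsMonic [Field k] [LinearOrder M] (f : M →₀ k) : Prop :=
  ∃ hf : f ≠ 0, f (leadMon f hf) = 1

/-- The one-step reduction relation associated with a set `T` of (monic) polynomials:
`f → g` iff there is `h ∈ T` with `f (lead h) ≠ 0` and `g = f - f (lead h) • h`. -/
def StepRel [Field k] [LinearOrder M] (T : Set (M →₀ k)) (f g : M →₀ k) : Prop :=
  ∃ h ∈ T, ∃ hh : h ≠ 0, f (leadMon h hh) ≠ 0 ∧ g = f - f (leadMon h hh) • h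

lemma eqvGen_sub_smul [Field k] [LinearOrder M] (T : Set (M →₀ k))
    (hT : ∀ f ∈ T, IsMonic f) (f : M →₀ k) (c : k) (h : M →₀ k) (hhT : h ∈ T) :
    Relation.EqvGen (StepRel T) f (f - c • h) := by
  obtain ⟨hh, hlead⟩ := hT h hhT
  set μ := leadMon h hh with hμ
  by_cases hc : c = 0
  · simpa [hc] using Relation.EqvGen.refl f
  have hgμ : (f - c • h) μ = f μ - c := by
    simp [Finsupp.sub_apply, Finsupp.smul_apply, ← hμ, hlead]
  by_cases ha : f μ = 0
  · refine Relation.EqvGen.symm _ _ (Relation.EqvGen.rel _ _ ?_)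
    refine ⟨h, hhT, hh, ?_, ?_⟩
    · rw [← hμ, hgμ, ha]; simpa using hc
    · rw [← hμ, hgμ, ha]
      simp [sub_smul, neg_smul]
  · by_cases hac : f μ = c
    · refine Relation.EqvGen.rel _ _ ⟨h, hhT, hh, ?_, ?_⟩
      · rw [← hμ]; exact ha
      · rw [← hμ, hac]
    · refine Relation.EqvGen.trans _ (f - f μ • h) _
        (Relation.EqvGen.rel _ _ ⟨h, hhT, hh, by rw [← hμ]; exact ha, by rw [← hμ]⟩)
        (Relation.EqvGen.symm _ _ (Relation.EqvGen.rel _ _ ?_))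
      refine ⟨h, hhT, hh, ?_, ?_⟩
      · rw [← hμ, hgμ]; exact sub_ne_zero_of_ne hac
      · rw [← hμ, hgμ]
        rw [sub_smul, sub_sub_sub_cancel_right]

lemma eqvGen_sub_mem [Field k] [LinearOrder M] (T : Set (M →₀ k))
    (hT : ∀ f ∈ T, IsMonic f) (s : M →₀ k) (hs : s ∈ Submodule.span k T) :
    ∀ f : M →₀ k, Relation.EqvGen (StepRel T) f (f - s) := by
  rw [Submodule.mem_span_set'] at hs
  obtain ⟨n, c, g, rfl⟩ := hs
  induction n with
  | zero => intro f; simpa using Relation.EqvGen.refl f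
  | succ m ih =>
    intro f
    rw [Fin.sum_univ_succ]
    refine Relation.EqvGen.trans _ (f - c 0 • (g 0 : M →₀ k)) _
      (eqvGen_sub_smul T hT f (c 0) (g 0) (g 0).2) ?_
    have := ih (fun i => c i.succ) (fun i => g i.succ) (f - c 0 • (g 0 : M →₀ k))
    rw [sub_add_eq_sub_sub] at *
    exact this

/-- `f ~ g` (equivalence closure of the reduction relation) iff `f - g ∈ span T`;
consequently the connected components of the rewriting system are exactly the
cosets of `span T`, i.e. the elements of `(M →₀ k) ⧸ span T`. -/
theorem eqvGen_stepRel_iff_sub_mem_span [Field k] [LinearOrder M]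
    (T : Set (M →₀ k)) (hT : ∀ f ∈ T, IsMonic f) :
    (∀ f g : M →₀ k, Relation.EqvGen (StepRel T) f g ↔ f - g ∈ Submodule.span k T) ∧
    (∀ f g : M →₀ k, Relation.EqvGen (StepRel T) f g ↔
      (Submodule.Quotient.mk f : (M →₀ k) ⧸ Submodule.span k T) = Submodule.Quotient.mk g) := by

  have key : ∀ f g : M →₀ k, Relation.EqvGen (StepRel T) f g ↔ f - g ∈ Submodule.span k T := by
    intro f g
    constructor
    · intro hfg
      induction hfg with
      | rel a b hab =>
        obtain ⟨h, hhT, hh, _, rfl⟩ := hab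
        simpa using Submodule.smul_mem _ _ (Submodule.subset_span hhT)
      | refl a => simp
      | symm a b _ ih => simpa using Submodule.neg_mem _ ih
      | trans a b cc _ _ ih1 ih2 =>
        have := Submodule.add_mem _ ih1 ih2
        simpa using this
    · intro hmem
      have := eqvGen_sub_mem T hT (f - g) hmem f
      simpa using this
  refine ⟨key, fun f g => ?_⟩
  rw [key, Submodule.Quotient.eq]
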